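/- arXiv:2111.11038 — 6 statements merged into one kernel-verified Lean document; each statement's English description precedes it below -/
import Mathlib

section
/- Fix reals N > 0, B > 0, define f(x) = N·(2^(x/B) − 1) and g(x) = f(x) − x·f'(x) where f'(x) = (N·ln 2/B)·2^(x/B). Then g(0) = 0, and g is strictly antitone (strictly decreasing) on the interval [0, ∞); in particular g(x) < 0 for all x > 0. -/
open Real Set

/-! Since `g' x = -x * f'' x` and `f'' > 0` on `(0, ∞)`, `g` is strictly decreasing on `[0, ∞)`;
as `g 0 = f 0 = 0`, it is negative on `(0, ∞)`. -/

theorem strictAntiOn_sub_mul_deriv_Ici {f f' f'' : ℝ → ℝ}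
    (hf : ∀ x, 0 ≤ x → HasDerivAt f (f' x) x) (hf' : ∀ x, 0 ≤ x → HasDerivAt f' (f'' x) x)
    (hf'' : ∀ x, 0 < x → 0 < f'' x) :
    StrictAntiOn (fun x => f x - x * f' x) (Ici 0) := by
  have hg : ∀ x, 0 ≤ x → HasDerivAt (fun x => f x - x * f' x) (-(x * f'' x)) x := fun x hx =>
    ((hf x hx).sub ((hasDerivAt_id' x).mul (hf' x hx))).congr_deriv (by ring)
  refine strictAntiOn_of_deriv_neg (convex_Ici 0)
    (fun x hx => (hg x hx).continuousAt.continuousWithinAt) fun x hx => ?_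
  rw [interior_Ici] at hx
  rw [(hg x (le_of_lt hx)).deriv]
  exact neg_neg_of_pos (mul_pos hx (hf'' x hx))

theorem hasDerivAt_rpow_div_const {a : ℝ} (ha : 0 < a) (B x : ℝ) :
    HasDerivAt (fun x => a ^ (x / B)) (log a / B * a ^ (x / B)) x :=
  (((hasDerivAt_id' x).div_const B).const_rpow ha).congr_deriv (by ring)

/-- With `N, B > 0`, `f x = N * (2 ^ (x / B) - 1)`,
`f' x = (N * log 2 / B) * 2 ^ (x / B)` and `g x = f x - x * f' x`:
`g 0 = 0`, `g` is strictly decreasing on `[0, ∞)`, and `g x < 0` for all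
`x > 0`. -/
theorem stmt_7 (N B : ℝ) (hN : 0 < N) (hB : 0 < B)
    (f f' g : ℝ → ℝ)
    (hf : ∀ x, f x = N * ((2 : ℝ) ^ (x / B) - 1))
    (hf' : ∀ x, f' x = (N * Real.log 2 / B) * (2 : ℝ) ^ (x / B))
    (hg : ∀ x, g x = f x - x * f' x) :
    g 0 = 0 ∧ StrictAntiOn g (Set.Ici 0) ∧ ∀ x : ℝ, 0 < x → g x < 0 := by
  have hderiv_f : ∀ x, HasDerivAt f (f' x) x := fun x => by
    rw [funext hf, hf']
    exact (((hasDerivAt_rpow_div_const two_pos B x).sub_const 1).const_mul N).congr_deriv (by ring)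
  have hderiv_f' : ∀ x, HasDerivAt f' (N * (log 2 / B) ^ 2 * 2 ^ (x / B)) x := fun x => by
    rw [funext hf']
    exact ((hasDerivAt_rpow_div_const two_pos B x).const_mul (N * log 2 / B)).congr_deriv (by ring)
  have hg0 : g 0 = 0 := by simp [hg, hf]
  have hanti : StrictAntiOn g (Ici 0) := funext hg ▸
    strictAntiOn_sub_mul_deriv_Ici (fun x _ => hderiv_f x) (fun x _ => hderiv_f' x)
      fun x _ => by have := log_pos one_lt_two; positivity
  exact ⟨hg0, hanti, fun x hx => hg0 ▸ hanti self_mem_Ici hx.le hx⟩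
end

section
/- Fix reals N > 0, B > 0, define f(x) = N·(2^(x/B) − 1) and g(x) = f(x) − x·f'(x) where f'(x) = (N·ln 2/B)·2^(x/B). Then g restricted to [0, ∞) is a bijection from [0, ∞) onto (−∞, 0]; in particular, for every y ≤ 0 there is a unique x ≥ 0 with g(x) = y, and this inverse map y ↦ g^{-1}(y) is strictly antitone on (−∞, 0]. -/
/-!
`g x = f x - x * f' x` is the intercept at `0` of the tangent to `f` at `x`. Writing
`c = log 2 / B`, we have `f x = N (exp (c x) - 1)`, so `g x = N φ (c x)` with
`φ t = (1 - t) exp t - 1`, the tangent intercept of `exp - 1`. Since `φ' t = -t exp t`,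
`φ 0 = 0` and `φ t ≤ -t²` for `t ≥ 1` (from `exp t ≥ 1 + t`), `φ` decreases strictly from `0`
to `-∞` on `[0, ∞)`, hence maps it onto `(-∞, 0]` by the intermediate value theorem; the
inverse of a strictly decreasing bijection is strictly decreasing.
-/

open Real Set Filter Function

section Inverse

variable {α β : Type*} {f : α → β} {s : Set α} {t : Set β}

theorem Set.BijOn.existsUnique_mem_eq (h : BijOn f s t) {y : β} (hy : y ∈ t) :
    ∃! x, x ∈ s ∧ f x = y := by
  obtain ⟨x, hx, rfl⟩ := h.surjOn hy
  exact ⟨x, ⟨hx, rfl⟩, fun z hz => h.injOn hz.1 hx hz.2⟩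

theorem Set.SurjOn.strictAntiOn_invFunOn [Nonempty α] [LinearOrder α] [Preorder β]
    (h : SurjOn f s t) (hf : AntitoneOn f s) : StrictAntiOn (invFunOn f s) t := by
  intro y₁ hy₁ y₂ hy₂ hlt
  by_contra! hle
  have hmaps := h.mapsTo_invFunOn
  have hinv := h.rightInvOn_invFunOn
  have := hf (hmaps hy₁) (hmaps hy₂) hle
  rw [hinv hy₁, hinv hy₂] at this
  exact this.not_gt hlt

end Inverse

section HalfLine

variable {α δ : Type*} [ConditionallyCompleteLinearOrder α] [TopologicalSpace α] [OrderTopology α]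
  [DenselyOrdered α] [LinearOrder δ] [TopologicalSpace δ] [OrderClosedTopology δ]
  {f : α → δ} {a : α}

theorem ContinuousOn.surjOn_Ici_Iic_of_tendsto_atBot (hf : ContinuousOn f (Ici a))
    (htop : Tendsto f atTop atBot) : SurjOn f (Ici a) (Iic (f a)) := by
  intro y hy
  obtain ⟨b, hb⟩ := eventually_atTop.1 (htop.eventually (eventually_le_atBot y))
  have hab : a ≤ max a b := le_max_left a b
  obtain ⟨x, hx, rfl⟩ := intermediate_value_Icc' hab (hf.mono Icc_subset_Ici_self)
    ⟨hb _ (le_max_right a b), hy⟩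
  exact ⟨x, hx.1, rfl⟩

theorem StrictAntiOn.bijOn_Ici_Iic (hanti : StrictAntiOn f (Ici a)) (hf : ContinuousOn f (Ici a))
    (htop : Tendsto f atTop atBot) : BijOn f (Ici a) (Iic (f a)) :=
  ⟨fun _ hx => hanti.antitoneOn self_mem_Ici hx hx, hanti.injOn,
    hf.surjOn_Ici_Iic_of_tendsto_atBot htop⟩

end HalfLine

noncomputable def expTangentIntercept (t : ℝ) : ℝ := (1 - t) * exp t - 1

theorem expTangentIntercept_zero : expTangentIntercept 0 = 0 := by
  simp [expTangentIntercept]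

theorem hasDerivAt_expTangentIntercept (t : ℝ) :
    HasDerivAt expTangentIntercept (-(t * exp t)) t := by
  have := (((hasDerivAt_id t).const_sub 1).mul (hasDerivAt_exp t)).sub_const 1
  exact this.congr_deriv (by simp only [id]; ring)

@[fun_prop]
theorem continuous_expTangentIntercept : Continuous expTangentIntercept := by
  unfold expTangentIntercept; fun_prop

theorem strictAntiOn_expTangentIntercept : StrictAntiOn expTangentIntercept (Ici 0) := by
  refine strictAntiOn_of_hasDerivWithinAt_neg (convex_Ici 0)
    continuous_expTangentIntercept.continuousOn
    (fun t _ => (hasDerivAt_expTangentIntercept t).hasDerivWithinAt) fun t ht => ?_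
  rw [interior_Ici] at ht
  have : 0 < t * exp t := mul_pos ht (exp_pos t)
  linarith

theorem expTangentIntercept_le_neg_sq {t : ℝ} (ht : 1 ≤ t) : expTangentIntercept t ≤ -t ^ 2 := by
  have := mul_le_mul_of_nonpos_left (add_one_le_exp t) (sub_nonpos.2 ht)
  unfold expTangentIntercept
  nlinarith

theorem tendsto_expTangentIntercept_atTop : Tendsto expTangentIntercept atTop atBot := by
  refine tendsto_atBot_mono' atTop ?_ (tendsto_neg_atTop_atBot.comp (tendsto_pow_atTop two_ne_zero))
  filter_upwards [eventually_ge_atTop 1] with t ht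
  exact expTangentIntercept_le_neg_sq ht

section Scaled

variable {N c : ℝ}

theorem strictAntiOn_const_mul_expTangentIntercept_mul (hN : 0 < N) (hc : 0 < c) :
    StrictAntiOn (fun x => N * expTangentIntercept (c * x)) (Ici 0) := fun _ hx _ hy hxy =>
  mul_lt_mul_of_pos_left
    (strictAntiOn_expTangentIntercept (mul_nonneg hc.le hx) (mul_nonneg hc.le hy)
      (mul_lt_mul_of_pos_left hxy hc)) hN

theorem bijOn_const_mul_expTangentIntercept_mul (hN : 0 < N) (hc : 0 < c) :
    BijOn (fun x => N * expTangentIntercept (c * x)) (Ici 0) (Iic 0) := by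
  have htop : Tendsto (fun x => N * expTangentIntercept (c * x)) atTop atBot :=
    (tendsto_expTangentIntercept_atTop.comp (tendsto_id.const_mul_atTop hc)).const_mul_atBot hN
  simpa [expTangentIntercept_zero] using
    (strictAntiOn_const_mul_expTangentIntercept_mul hN hc).bijOn_Ici_Iic
      (by fun_prop) htop

end Scaled

/-- With `N, B > 0`, `f x = N * (2 ^ (x / B) - 1)`,
`f' x = (N * log 2 / B) * 2 ^ (x / B)` and `g x = f x - x * f' x`:
`g` restricted to `[0, ∞)` is a bijection onto `(-∞, 0]`; in particular, for
every `y ≤ 0` there is a unique `x ≥ 0` with `g x = y`, and the inverse map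
`g⁻¹` is strictly antitone on `(-∞, 0]`. -/
theorem stmt_8 (N B : ℝ) (hN : 0 < N) (hB : 0 < B)
    (f f' g : ℝ → ℝ)
    (hf : ∀ x, f x = N * ((2 : ℝ) ^ (x / B) - 1))
    (hf' : ∀ x, f' x = (N * Real.log 2 / B) * (2 : ℝ) ^ (x / B))
    (hg : ∀ x, g x = f x - x * f' x) :
    Set.BijOn g (Set.Ici 0) (Set.Iic 0) ∧
    (∀ y : ℝ, y ≤ 0 → ∃! x : ℝ, x ∈ Set.Ici (0 : ℝ) ∧ g x = y) ∧
    StrictAntiOn (Function.invFunOn g (Set.Ici 0)) (Set.Iic 0) := by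
  have hc : 0 < log 2 / B := div_pos (log_pos one_lt_two) hB
  have hg_eq : g = fun x => N * expTangentIntercept (log 2 / B * x) := by
    funext x
    rw [hg, hf, hf', rpow_def_of_pos two_pos, expTangentIntercept]
    ring_nf
  have hbij := bijOn_const_mul_expTangentIntercept_mul hN hc
  have hanti := strictAntiOn_const_mul_expTangentIntercept_mul hN hc
  rw [← hg_eq] at hbij hanti
  exact ⟨hbij, fun _ hy => hbij.existsUnique_mem_eq hy,
    hbij.surjOn.strictAntiOn_invFunOn hanti.antitoneOn⟩
end

section
/- Fix reals N > 0, B > 0, h > 0 and d > 0, and let f(x) = N·(2^(x/B) − 1). Then the transmission-energy function t ↦ (t/h)·f(d/t) is strictly antitone (strictly decreasing) on (0, ∞). -/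
/-!
With `c = (d / B) * log 2`, the energy is the positive multiple `N / h` of
`t * (exp (c / t) - 1) = c * (exp u - exp 0) / (u - 0)`, where `u = c / t`. This is the slope of
the secant of the strictly convex `exp` from `0` to `u`, which increases with `u` and hence
decreases with `t`.
-/

open Real Set

theorem StrictConvexOn.strictAntiOn_mul_sub_comp_div {𝕜 : Type*} [Field 𝕜] [LinearOrder 𝕜]
    [IsStrictOrderedRing 𝕜] {φ : 𝕜 → 𝕜} {s : Set 𝕜} (hφ : StrictConvexOn 𝕜 s φ) (h0 : 0 ∈ s)
    (hs : Ioi 0 ⊆ s) {c : 𝕜} (hc : 0 < c) :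
    StrictAntiOn (fun t => t * (φ (c / t) - φ 0)) (Ioi 0) := by
  intro t₁ (ht₁ : 0 < t₁) t₂ (ht₂ : 0 < t₂) hlt
  have hu₁ : 0 < c / t₁ := div_pos hc ht₁
  have hu₂ : 0 < c / t₂ := div_pos hc ht₂
  have hslope : (φ (c / t₂) - φ 0) / (c / t₂ - 0) < (φ (c / t₁) - φ 0) / (c / t₁ - 0) :=
    hφ.secant_strict_mono h0 (hs hu₂) (hs hu₁) hu₂.ne' hu₁.ne'
      (div_lt_div_of_pos_left hc ht₁ hlt)
  have hperspective : ∀ t, 0 < t →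
      t * (φ (c / t) - φ 0) = c * ((φ (c / t) - φ 0) / (c / t - 0)) := by
    intro t ht
    rw [sub_zero]
    field_simp
  dsimp only
  rw [hperspective t₁ ht₁, hperspective t₂ ht₂]
  exact mul_lt_mul_of_pos_left hslope hc

/-- With `N, B, h > 0` and `d > 0`, and
`f x = N * (2 ^ (x / B) - 1)`, the transmission-energy function
`t ↦ (t / h) * f (d / t)` is strictly decreasing on `(0, ∞)`. -/
theorem stmt_10 (N B h d : ℝ) (hN : 0 < N) (hB : 0 < B) (hh : 0 < h)
    (hd : 0 < d) :
    StrictAntiOn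
      (fun t : ℝ => (t / h) * (N * ((2 : ℝ) ^ ((d / t) / B) - 1)))
      (Set.Ioi 0) := by
  have hc : 0 < d / B * log 2 := by positivity
  have hexp := strictConvexOn_exp.strictAntiOn_mul_sub_comp_div (mem_univ 0) (subset_univ _) hc
  have hform : (fun t : ℝ => (t / h) * (N * ((2 : ℝ) ^ ((d / t) / B) - 1)))
      = fun t => N / h * (t * (exp (d / B * log 2 / t) - exp 0)) := by
    funext t
    rw [rpow_def_of_pos two_pos, exp_zero]
    ring_nf
  rw [hform]
  exact fun t₁ ht₁ t₂ ht₂ hlt => mul_lt_mul_of_pos_left (hexp ht₁ ht₂ hlt) (by positivity)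
end

section
/- Fix reals N > 0, B > 0, h > 0, C > 0, p > 0 and let f(x) = N·(2^(x/B) − 1). If the priority indicator O = B·h·C·p/(N·ln 2) satisfies O ≤ 1, then for every d ≥ 0 and every t > 0, (t/h)·f(d/t) ≥ C·p·d; i.e., the transmission energy for offloading d bits in any time t is at least the local-computation energy C·p·d for those bits. -/
/-! Since `2 ^ y = exp (y log 2) ≥ 1 + y log 2`, the transmission energy `(t / h) f (d / t)` is at
least its linearisation `d N log 2 / (h B)`, which is independent of `t`; the hypothesis `O ≤ 1`
says exactly that `C p ≤ N log 2 / (h B)`. -/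

open Real

lemma Real.mul_log_le_rpow_sub_one {b : ℝ} (hb : 0 < b) (x : ℝ) : x * log b ≤ b ^ x - 1 := by
  have := add_one_le_exp (log b * x)
  rw [rpow_def_of_pos hb]
  linarith [mul_comm x (log b)]

lemma linear_le_transmission_energy {N h t : ℝ} (hN : 0 ≤ N) (hh : 0 < h) (ht : 0 < t)
    (d B : ℝ) :
    d * (N * log 2) / (h * B) ≤ (t / h) * (N * ((2 : ℝ) ^ ((d / t) / B) - 1)) :=
  calc d * (N * log 2) / (h * B) = (t / h) * (N * ((d / t) / B * log 2)) := by
        field_simp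
    _ ≤ (t / h) * (N * ((2 : ℝ) ^ ((d / t) / B) - 1)) := by
        gcongr
        exact mul_log_le_rpow_sub_one two_pos _

theorem stmt_12_general (N B h C p : ℝ) (hN : 0 < N) (hB : 0 < B) (hh : 0 < h)
    (hO : B * h * C * p / (N * Real.log 2) ≤ 1) :
    ∀ d : ℝ, 0 ≤ d → ∀ t : ℝ, 0 < t →
      C * p * d ≤ (t / h) * (N * ((2 : ℝ) ^ ((d / t) / B) - 1)) := by
  intro d hd t ht
  have hCp : C * p ≤ N * log 2 / (h * B) := by
    rw [le_div_iff₀ (by positivity)]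
    have := (div_le_one (by positivity)).mp hO
    linarith
  calc C * p * d ≤ N * log 2 / (h * B) * d := mul_le_mul_of_nonneg_right hCp hd
    _ = d * (N * log 2) / (h * B) := by ring
    _ ≤ _ := linear_le_transmission_energy hN.le hh ht d B

/-- With `N, B, h, C, p > 0` and `f x = N * (2 ^ (x / B) - 1)`:
if the priority indicator `O = B * h * C * p / (N * log 2)` satisfies `O ≤ 1`,
then for every `d ≥ 0` and every `t > 0`,
`(t / h) * f (d / t) ≥ C * p * d`, i.e. the transmission energy for offloading
`d` bits in any time `t` is at least the local-computation energy `C * p * d`. -/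
theorem stmt_12 (N B h C p : ℝ) (hN : 0 < N) (hB : 0 < B) (hh : 0 < h)
    (hC : 0 < C) (hp : 0 < p)
    (hO : B * h * C * p / (N * Real.log 2) ≤ 1) :
    ∀ d : ℝ, 0 ≤ d → ∀ t : ℝ, 0 < t →
      C * p * d ≤ (t / h) * (N * ((2 : ℝ) ^ ((d / t) / B) - 1)) :=
  stmt_12_general N B h C p hN hB hh hO
end

section
/- Fix reals N > 0, B > 0, h > 0, C > 0, p > 0, T > 0, D > 0 and G with 0 ≤ G ≤ D; let f(x) = N·(2^(x/B) − 1) and f'(x) = (N·ln 2/B)·2^(x/B). Define F(d) = (T/h)·f(d/T) + (D − d)·C·p for d ∈ [G, D]. If f'(G/T) ≥ C·p·h, then F(G) ≤ F(d) for all d ∈ [G, D]; i.e., offloading only the minimum required amount G minimizes the total (transmission plus local-computation) energy. -/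
/-! The energy `F` is convex in `d`, and the hypothesis says that its slope at `G` is
nonnegative; so `F` lies above its tangent at `G`, which is nondecreasing. Concretely, the
tangent inequality `exp t ≥ 1 + t` puts the rate function `f` above its tangent line at
`G / T`, and after scaling by `T / h` the linear term dominates the saved computing
energy `(d - G) * C * p`. -/

open Real

lemma rpow_mul_one_add_log_mul_sub_le_rpow {b : ℝ} (hb : 0 < b) (x y : ℝ) :
    b ^ y * (1 + log b * (x - y)) ≤ b ^ x := by
  calc b ^ y * (1 + log b * (x - y)) ≤ b ^ y * exp (log b * (x - y)) := by
        gcongr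
        linarith [add_one_le_exp (log b * (x - y))]
    _ = b ^ x := by
        rw [← rpow_def_of_pos hb, ← rpow_add hb, add_sub_cancel]

lemma mul_two_rpow_div_sub_one_tangent_le {N : ℝ} (hN : 0 ≤ N) (B x y : ℝ) :
    N * ((2 : ℝ) ^ (y / B) - 1) + N * log 2 / B * (2 : ℝ) ^ (y / B) * (x - y) ≤
      N * ((2 : ℝ) ^ (x / B) - 1) := by
  have h := mul_le_mul_of_nonneg_left
    (rpow_mul_one_add_log_mul_sub_le_rpow two_pos (x / B) (y / B)) hN
  rw [← sub_div, mul_div_assoc'] at h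
  calc _ = N * (2 ^ (y / B) * (1 + log 2 * (x - y) / B)) - N := by ring
    _ ≤ _ := by linarith

theorem stmt_13_general (N B h C p T D G : ℝ) (hN : 0 < N) (hh : 0 < h)
    (hT : 0 < T)
    (f f' : ℝ → ℝ)
    (hf : ∀ x, f x = N * ((2 : ℝ) ^ (x / B) - 1))
    (hf' : ∀ x, f' x = (N * Real.log 2 / B) * (2 : ℝ) ^ (x / B))
    (F : ℝ → ℝ)
    (hF : ∀ d, F d = (T / h) * f (d / T) + (D - d) * C * p)
    (hcrit : C * p * h ≤ f' (G / T)) :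
    ∀ d ∈ Set.Icc G D, F G ≤ F d := by
  rintro d ⟨hGd, -⟩
  have htangent : f (G / T) + f' (G / T) * (d / T - G / T) ≤ f (d / T) := by
    rw [hf, hf, hf']
    exact mul_two_rpow_div_sub_one_tangent_le hN.le B _ _
  have hscaled := mul_le_mul_of_nonneg_left htangent (div_nonneg hT.le hh.le)
  have hlinear : T / h * (f' (G / T) * (d / T - G / T)) = f' (G / T) * (d - G) / h := by
    field_simp
  have hslope : C * p * (d - G) ≤ f' (G / T) * (d - G) / h := by
    rw [le_div_iff₀ hh]
    nlinarith [mul_le_mul_of_nonneg_right hcrit (sub_nonneg.mpr hGd)]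
  rw [mul_add, hlinear] at hscaled
  rw [hF, hF]
  linarith

/-- With `N, B, h, C, p, T, D > 0`, `0 ≤ G ≤ D`,
`f x = N * (2 ^ (x / B) - 1)`, `f' x = (N * log 2 / B) * 2 ^ (x / B)`, and the
total-energy function `F d = (T / h) * f (d / T) + (D - d) * C * p` on
`[G, D]`: if `f' (G / T) ≥ C * p * h`, then `F G ≤ F d` for all `d ∈ [G, D]`,
i.e. offloading only the minimum required amount `G` minimizes the total
energy. -/
theorem stmt_13 (N B h C p T D G : ℝ) (hN : 0 < N) (hB : 0 < B) (hh : 0 < h)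
    (hC : 0 < C) (hp : 0 < p) (hT : 0 < T) (hD : 0 < D)
    (hG0 : 0 ≤ G) (hGD : G ≤ D)
    (f f' : ℝ → ℝ)
    (hf : ∀ x, f x = N * ((2 : ℝ) ^ (x / B) - 1))
    (hf' : ∀ x, f' x = (N * Real.log 2 / B) * (2 : ℝ) ^ (x / B))
    (F : ℝ → ℝ)
    (hF : ∀ d, F d = (T / h) * f (d / T) + (D - d) * C * p)
    (hcrit : C * p * h ≤ f' (G / T)) :
    ∀ d ∈ Set.Icc G D, F G ≤ F d :=
  stmt_13_general N B h C p T D G hN hh hT f f' hf hf' F hF hcrit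
end

section
/- Fix reals N > 0, B > 0, h > 0, C > 0, p > 0, T > 0, D > 0 and G with 0 ≤ G ≤ D; let f(x) = N·(2^(x/B) − 1) and f'(x) = (N·ln 2/B)·2^(x/B). Define F(d) = (T/h)·f(d/T) + (D − d)·C·p for d ∈ [G, D]. If f'(D/T) ≤ C·p·h, then F(D) ≤ F(d) for all d ∈ [G, D]; i.e., offloading all collected data D minimizes the total (transmission plus local-computation) energy. -/
/-!
The transmission energy `d ↦ (T / h) * f (d / T)` is convex, so it lies above its tangent at
`D`: for `d ≤ D` it is at least its value at `D` minus `(D - d) * f' (D / T) / h`. The criterion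
`f' (D / T) ≤ C * p * h` says that this saving is at most the extra local-computation energy
`(D - d) * C * p`.
-/

open Real

theorem Real.rpow_sub_rpow_le_mul_log {b : ℝ} (hb : 0 < b) (u v : ℝ) :
    b ^ v - b ^ u ≤ b ^ v * log b * (v - u) := by
  have hsplit : b ^ u = b ^ v * exp (log b * (u - v)) := by
    rw [← rpow_def_of_pos hb, ← rpow_add hb, add_sub_cancel]
  have htangent : log b * (u - v) + 1 ≤ exp (log b * (u - v)) := add_one_le_exp _
  rw [hsplit]
  nlinarith [rpow_pos_of_pos hb v]

theorem two_rpow_cost_sub_le {N : ℝ} (hN : 0 ≤ N) (B u v : ℝ) :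
    N * ((2 : ℝ) ^ (v / B) - 1) - N * ((2 : ℝ) ^ (u / B) - 1)
      ≤ (N * log 2 / B) * (2 : ℝ) ^ (v / B) * (v - u) := by
  have key := rpow_sub_rpow_le_mul_log two_pos (u / B) (v / B)
  calc N * ((2 : ℝ) ^ (v / B) - 1) - N * ((2 : ℝ) ^ (u / B) - 1)
      = N * ((2 : ℝ) ^ (v / B) - (2 : ℝ) ^ (u / B)) := by ring
    _ ≤ N * ((2 : ℝ) ^ (v / B) * log 2 * (v / B - u / B)) := by gcongr
    _ = (N * log 2 / B) * (2 : ℝ) ^ (v / B) * (v - u) := by ring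

theorem stmt_14_general (N B h C p T D G : ℝ) (hN : 0 < N) (hh : 0 < h)
    (hT : 0 < T)
    (f f' : ℝ → ℝ)
    (hf : ∀ x, f x = N * ((2 : ℝ) ^ (x / B) - 1))
    (hf' : ∀ x, f' x = (N * Real.log 2 / B) * (2 : ℝ) ^ (x / B))
    (F : ℝ → ℝ)
    (hF : ∀ d, F d = (T / h) * f (d / T) + (D - d) * C * p)
    (hcrit : f' (D / T) ≤ C * p * h) :
    ∀ d ∈ Set.Icc G D, F D ≤ F d := by
  rintro d ⟨-, hdD⟩
  have htangent : f (D / T) - f (d / T) ≤ f' (D / T) * (D / T - d / T) := by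
    rw [hf, hf, hf']
    exact two_rpow_cost_sub_le hN.le B _ _
  have hsaving : (T / h) * (f (D / T) - f (d / T)) ≤ (D - d) * C * p :=
    calc (T / h) * (f (D / T) - f (d / T))
        ≤ (T / h) * (f' (D / T) * (D / T - d / T)) := by gcongr
      _ = (D - d) * f' (D / T) / h := by field_simp
      _ ≤ (D - d) * (C * p * h) / h := by gcongr
      _ = (D - d) * C * p := by field_simp
  rw [hF, hF]
  linear_combination hsaving

/-- With `N, B, h, C, p, T, D > 0`, `0 ≤ G ≤ D`,
`f x = N * (2 ^ (x / B) - 1)`, `f' x = (N * log 2 / B) * 2 ^ (x / B)`, and the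
total-energy function `F d = (T / h) * f (d / T) + (D - d) * C * p` on
`[G, D]`: if `f' (D / T) ≤ C * p * h`, then `F D ≤ F d` for all `d ∈ [G, D]`,
i.e. offloading all collected data `D` minimizes the total energy. -/
theorem stmt_14 (N B h C p T D G : ℝ) (hN : 0 < N) (hB : 0 < B) (hh : 0 < h)
    (hC : 0 < C) (hp : 0 < p) (hT : 0 < T) (hD : 0 < D)
    (hG0 : 0 ≤ G) (hGD : G ≤ D)
    (f f' : ℝ → ℝ)
    (hf : ∀ x, f x = N * ((2 : ℝ) ^ (x / B) - 1))
    (hf' : ∀ x, f' x = (N * Real.log 2 / B) * (2 : ℝ) ^ (x / B))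
    (F : ℝ → ℝ)
    (hF : ∀ d, F d = (T / h) * f (d / T) + (D - d) * C * p)
    (hcrit : f' (D / T) ≤ C * p * h) :
    ∀ d ∈ Set.Icc G D, F D ≤ F d :=
  stmt_14_general N B h C p T D G hN hh hT f f' hf hf' F hF hcrit
end
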